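/- For the Bernoulli-lemniscate system, the function W(x,y) = V(I(x,y)) with V(s) = s²/(2(1+s²)^{3/4}) is a Lyapunov function for the vector field b: for every point p ∈ ℝ², the Euclidean inner product of the gradient of W at p with b(p) equals minus the squared Euclidean norm of the gradient of W at p, i.e. ⟨∇W(p), b(p)⟩ = −‖∇W(p)‖². (Equivalently, the gradient part −∇W and the Hamiltonian part of b are orthogonal, so the derivative of W along solutions of ẋ = b(x) is −|∇W|².) -/

import Mathlib

open scoped RealInnerProductSpace

/-- `I(x,y) = (x²+y²)² − 4(x²−y²)`. -/
noncomputable def lemI (x y : ℝ) : ℝ := (x ^ 2 + y ^ 2) ^ 2 - 4 * (x ^ 2 - y ^ 2)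

/-- `f(s) = s(s²+4)/(4(1+s²)^{7/4})`. -/
noncomputable def lemf (s : ℝ) : ℝ := s * (s ^ 2 + 4) / (4 * (1 + s ^ 2) ^ ((7 : ℝ) / 4))

/-- `g(s) = (s²+4)/(4(1+s²)^{11/8})`. -/
noncomputable def lemg (s : ℝ) : ℝ := (s ^ 2 + 4) / (4 * (1 + s ^ 2) ^ ((11 : ℝ) / 8))

/-- First component of the Bernoulli-lemniscate vector field. -/
noncomputable def lemb₁ (x y : ℝ) : ℝ :=
  -lemf (lemI x y) * (4 * x * (x ^ 2 + y ^ 2) - 8 * x) -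
    lemg (lemI x y) * (4 * y * (x ^ 2 + y ^ 2) + 8 * y)

/-- Second component of the Bernoulli-lemniscate vector field. -/
noncomputable def lemb₂ (x y : ℝ) : ℝ :=
  -lemf (lemI x y) * (4 * y * (x ^ 2 + y ^ 2) + 8 * y) -
    lemg (lemI x y) * (-4 * x * (x ^ 2 + y ^ 2) + 8 * x)

/-- The Bernoulli-lemniscate vector field `b : ℝ² → ℝ²`. -/
noncomputable def lemb (p : EuclideanSpace ℝ (Fin 2)) : EuclideanSpace ℝ (Fin 2) :=
  (WithLp.equiv 2 (Fin 2 → ℝ)).symm ![lemb₁ (p 0) (p 1), lemb₂ (p 0) (p 1)]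

/-- `V(s) = s²/(2(1+s²)^{3/4})`. -/
noncomputable def lemV (s : ℝ) : ℝ := s ^ 2 / (2 * (1 + s ^ 2) ^ ((3 : ℝ) / 4))

/-- The Lyapunov function `W = V ∘ I` on `ℝ²`. -/
noncomputable def lemW (p : EuclideanSpace ℝ (Fin 2)) : ℝ := lemV (lemI (p 0) (p 1))

/-!
Write `∇I` for the gradient of `I` and `R` for the quarter turn `(u, v) ↦ (v, -u)`. By the chain
rule `∇W = f(I) ∇I`, while by its definition `b = -f(I) ∇I - g(I) R ∇I = -∇W - g(I) R ∇I`. Since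
`R ∇I ⊥ ∇I`, pairing with `∇W` gives `⟪∇W, b⟫ = -‖∇W‖²`.
-/

theorem HasDerivAt.comp_hasGradientAt {F : Type*} [NormedAddCommGroup F] [InnerProductSpace ℝ F]
    [CompleteSpace F] {h : ℝ → ℝ} {h' : ℝ} {f : F → ℝ} {g x : F}
    (hh : HasDerivAt h h' (f x)) (hf : HasGradientAt f g x) :
    HasGradientAt (h ∘ f) (h' • g) x := by
  rw [hasGradientAt_iff_hasFDerivAt, map_smul]
  exact hh.comp_hasFDerivAt x (hasGradientAt_iff_hasFDerivAt.mp hf)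

theorem inner_neg_sub_of_inner_eq_zero {E : Type*} [SeminormedAddCommGroup E]
    [InnerProductSpace ℝ E] {u w : E} (h : ⟪u, w⟫ = 0) : ⟪u, -u - w⟫ = -‖u‖ ^ 2 := by
  rw [inner_sub_right, inner_neg_right, h, real_inner_self_eq_norm_sq, sub_zero]

noncomputable def rotCW (v : EuclideanSpace ℝ (Fin 2)) : EuclideanSpace ℝ (Fin 2) := !₂[v 1, -v 0]

theorem inner_self_rotCW (v : EuclideanSpace ℝ (Fin 2)) : ⟪v, rotCW v⟫ = 0 := by
  simp only [rotCW, PiLp.inner_apply, RCLike.inner_apply, Real.ringHom_apply, Fin.sum_univ_two,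
    Matrix.cons_val_zero, Matrix.cons_val_one, Matrix.cons_val_fin_one]
  ring

theorem hasDerivAt_lemV (s : ℝ) : HasDerivAt lemV (lemf s) s := by
  have hA : (0 : ℝ) < 1 + s ^ 2 := by positivity
  have hden := (((hasDerivAt_pow 2 s).const_add 1).rpow_const (p := 3 / 4) (Or.inl hA.ne')).const_mul 2
  refine ((hasDerivAt_pow 2 s).div hden (by positivity)).congr_deriv ?_
  -- everything is a power of `u = (1 + s²)^(1/4)`
  set u : ℝ := (1 + s ^ 2) ^ ((1 : ℝ) / 4)
  have hu_pos : 0 < u := by positivity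
  have hpow (n : ℕ) : (1 + s ^ 2) ^ ((n : ℝ) / 4) = u ^ n := by
    rw [div_eq_mul_one_div, mul_comm, Real.rpow_mul_natCast hA.le]
  have hu4 : u ^ 4 = 1 + s ^ 2 := by rw [← hpow 4]; norm_num
  have h3 : (1 + s ^ 2) ^ ((3 : ℝ) / 4) = u ^ 3 := by exact_mod_cast hpow 3
  have h7 : (1 + s ^ 2) ^ ((7 : ℝ) / 4) = u ^ 7 := by exact_mod_cast hpow 7
  have hm1 : (1 + s ^ 2) ^ ((3 : ℝ) / 4 - 1) = u⁻¹ := by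
    rw [show (3 : ℝ) / 4 - 1 = -(1 / 4) by norm_num, Real.rpow_neg hA.le]
  rw [lemf, h3, h7, hm1]
  field_simp
  linear_combination (8 * s) * hu4

noncomputable def gradLemI (p : EuclideanSpace ℝ (Fin 2)) : EuclideanSpace ℝ (Fin 2) :=
  !₂[4 * p 0 * (p 0 ^ 2 + p 1 ^ 2) - 8 * p 0, 4 * p 1 * (p 0 ^ 2 + p 1 ^ 2) + 8 * p 1]

theorem hasGradientAt_lemI (p : EuclideanSpace ℝ (Fin 2)) :
    HasGradientAt (fun q : EuclideanSpace ℝ (Fin 2) => lemI (q 0) (q 1)) (gradLemI p) p := by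
  have hx := (EuclideanSpace.proj (0 : Fin 2) : EuclideanSpace ℝ (Fin 2) →L[ℝ] ℝ).hasFDerivAt (x := p)
  have hy := (EuclideanSpace.proj (1 : Fin 2) : EuclideanSpace ℝ (Fin 2) →L[ℝ] ℝ).hasFDerivAt (x := p)
  have hr := (hx.mul hx).add (hy.mul hy)
  have hI := (hr.mul hr).sub (((hx.mul hx).sub (hy.mul hy)).const_mul 4)
  rw [hasGradientAt_iff_hasFDerivAt]
  refine (hI.congr_fderiv ?_).congr_of_eventuallyEq (.of_forall fun q => ?_)
  · ext v
    simp only [EuclideanSpace.coe_proj, PiLp.proj_apply, Pi.add_apply, Pi.mul_apply, add_apply,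
      sub_apply, smul_apply, smul_eq_mul, gradLemI, InnerProductSpace.toDual_apply_apply,
      PiLp.inner_apply, RCLike.inner_apply, Real.ringHom_apply, Fin.sum_univ_two,
      Matrix.cons_val_zero, Matrix.cons_val_one, Matrix.cons_val_fin_one]
    ring
  · simp only [lemI, EuclideanSpace.coe_proj, Pi.sub_apply, Pi.mul_apply, Pi.add_apply]
    ring

theorem gradient_lemW (p : EuclideanSpace ℝ (Fin 2)) :
    gradient lemW p = lemf (lemI (p 0) (p 1)) • gradLemI p :=
  ((hasDerivAt_lemV _).comp_hasGradientAt (hasGradientAt_lemI p)).gradient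

theorem lemb_eq_gradLemI_rotCW (p : EuclideanSpace ℝ (Fin 2)) :
    lemb p = -(lemf (lemI (p 0) (p 1)) • gradLemI p) -
      lemg (lemI (p 0) (p 1)) • rotCW (gradLemI p) := by
  ext i
  fin_cases i <;>
    simp only [lemb, lemb₁, lemb₂, gradLemI, rotCW, WithLp.equiv_symm_apply, Fin.zero_eta,
      Fin.mk_one, Matrix.cons_val_zero, Matrix.cons_val_one, Matrix.cons_val_fin_one,
      PiLp.sub_apply, PiLp.neg_apply, PiLp.smul_apply, smul_eq_mul] <;>
    ring

/-- `W = V ∘ I` is a Lyapunov function for the Bernoulli-lemniscate vector field: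
at every point `p`, `⟨∇W(p), b(p)⟩ = −‖∇W(p)‖²`. -/
theorem lemniscate_lyapunov (p : EuclideanSpace ℝ (Fin 2)) :
    ⟪gradient lemW p, lemb p⟫ = -‖gradient lemW p‖ ^ 2 := by
  rw [gradient_lemW, lemb_eq_gradLemI_rotCW]
  refine inner_neg_sub_of_inner_eq_zero ?_
  rw [real_inner_smul_left, real_inner_smul_right, inner_self_rotCW, mul_zero, mul_zero]
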